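/- arXiv:2505.21430 — 2 statements merged into one kernel-verified Lean document; each statement's English description precedes it below -/
import Mathlib

section
/- Let ℓ(w) = Σ_{i=1}^n q_i · max{0, 1 − y_i (x_i · w)/γ} with q_i ≥ 0, γ > 0. Suppose ŵ ∈ ℝ^d, g is a subgradient of ℓ at ŵ, ẑ is a subgradient of the L1 norm at ŵ, λ₁, λ₂ ≥ 0 with λ₁ + λ₂ > 0, and g + λ₁ẑ + λ₂ŵ = 0. Assume the boundary conditions ẑ·ŵ = ‖ŵ‖₁ = √s and ŵ·ŵ = ‖ŵ‖₂² = 1 whenever λ₁ > 0 and λ₂ > 0 respectively hold. Define κ = (λ₁ ẑ + λ₂ ŵ)/(√s λ₁ + λ₂) and w' = w* − ŵ·⟨w*, κ⟩ for any w* ∈ ℝ^d. Then g · w' = 0. -/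
open Matrix

/-! Stationarity says `g = -(λ₁ẑ + λ₂ŵ)`, and complementary slackness turns this into
`g ⬝ ŵ = -(√s λ₁ + λ₂)`, so `(g ⬝ ŵ) κ = g`. Then `g ⬝ (⟨w*, κ⟩ ŵ) = ⟨w*, (g ⬝ ŵ) κ⟩ = g ⬝ w*`,
and the correction cancels `g ⬝ w*` exactly. -/

theorem mul_eq_mul_of_pos_imp_eq {a b c : ℝ} (ha : 0 ≤ a) (h : 0 < a → b = c) :
    a * b = a * c := by
  rcases ha.eq_or_lt with rfl | ha
  · simp
  · rw [h ha]

theorem dotProduct_sub_dotProduct_smul_eq_zero {R ι : Type*} [CommRing R] [Fintype ι]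
    {g v κ : ι → R} (hκ : (g ⬝ᵥ v) • κ = g) (w : ι → R) :
    g ⬝ᵥ (w - (w ⬝ᵥ κ) • v) = 0 := by
  conv_lhs => rw [dotProduct_sub, dotProduct_smul, smul_eq_mul, mul_comm,
    ← smul_eq_mul, ← dotProduct_smul, hκ, dotProduct_comm, sub_self]

theorem dotProduct_eq_of_kkt {ι : Type*} [Fintype ι] {g z w : ι → ℝ} {lam1 lam2 t : ℝ}
    (hlam1 : 0 ≤ lam1) (hlam2 : 0 ≤ lam2) (hstat : g = -(lam1 • z + lam2 • w))
    (h1 : 0 < lam1 → z ⬝ᵥ w = t) (h2 : 0 < lam2 → w ⬝ᵥ w = 1) :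
    g ⬝ᵥ w = -(t * lam1 + lam2) := by
  rw [hstat, neg_dotProduct, add_dotProduct, smul_dotProduct, smul_dotProduct, smul_eq_mul,
    smul_eq_mul, mul_eq_mul_of_pos_imp_eq hlam1 h1, mul_eq_mul_of_pos_imp_eq hlam2 h2]
  ring

theorem stmt5_general (d : ℕ) (s : ℝ) (hs : 0 < s)
    (g zhat what wstar : Fin d → ℝ) (lam1 lam2 : ℝ)
    (hlam1 : 0 ≤ lam1) (hlam2 : 0 ≤ lam2)
    (hstat : ∀ j, g j + lam1 * zhat j + lam2 * what j = 0)
    (hb1 : 0 < lam1 → ∑ j, zhat j * what j = Real.sqrt s ∧ ∑ j, |what j| = Real.sqrt s)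
    (hb2 : 0 < lam2 → ∑ j, what j * what j = 1)
    (κ : Fin d → ℝ)
    (hκ : ∀ j, κ j = (lam1 * zhat j + lam2 * what j) / (Real.sqrt s * lam1 + lam2))
    (w' : Fin d → ℝ)
    (hw' : ∀ j, w' j = wstar j - what j * (∑ k, wstar k * κ k)) :
    ∑ j, g j * w' j = 0 := by
  have hg : g = -(lam1 • zhat + lam2 • what) := by
    ext j; simp only [Pi.neg_apply, Pi.add_apply, Pi.smul_apply, smul_eq_mul]; linarith [hstat j]
  have hgw : g ⬝ᵥ what = -(Real.sqrt s * lam1 + lam2) :=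
    dotProduct_eq_of_kkt hlam1 hlam2 hg (fun h => (hb1 h).1) hb2
  have hgκ : (g ⬝ᵥ what) • κ = g := by
    ext j
    rw [hgw, Pi.smul_apply, hκ j, hg, smul_eq_mul]
    have hsqrt : 0 < Real.sqrt s := Real.sqrt_pos.2 hs
    rcases (by positivity : 0 ≤ Real.sqrt s * lam1 + lam2).eq_or_lt with hc | hc
    · -- `√s λ₁ + λ₂ = 0` forces `λ₁ = λ₂ = 0`, so both sides vanish.
      obtain ⟨rfl, rfl⟩ : lam1 = 0 ∧ lam2 = 0 := by constructor <;> nlinarith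
      simp
    · simp only [Pi.neg_apply, Pi.add_apply, Pi.smul_apply, smul_eq_mul]
      field_simp
  have hw : w' = wstar - (wstar ⬝ᵥ κ) • what := by
    ext j; rw [hw' j]; simp [dotProduct, mul_comm]
  change g ⬝ᵥ w' = 0
  rw [hw]
  exact dotProduct_sub_dotProduct_smul_eq_zero hgκ wstar

/-- KKT orthogonality construction: with stationarity `g + λ₁ẑ + λ₂ŵ = 0` and
complementary slackness, the correction vector `w' = w* − ŵ⟨w*,κ⟩` with
`κ = (λ₁ẑ + λ₂ŵ)/(√s λ₁ + λ₂)` satisfies `g · w' = 0`. -/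
theorem stmt5 (d n : ℕ) (s γ : ℝ) (hs : 0 < s) (hγ : 0 < γ)
    (q : Fin n → ℝ) (hq : ∀ i, 0 ≤ q i)
    (x : Fin n → Fin d → ℝ) (y : Fin n → ℝ)
    (g zhat what wstar : Fin d → ℝ) (lam1 lam2 : ℝ)
    (hlam1 : 0 ≤ lam1) (hlam2 : 0 ≤ lam2) (hlam : 0 < lam1 + lam2)
    (hg : ∀ w : Fin d → ℝ,
      ∑ i, q i * max 0 (1 - y i * (∑ j, x i j * w j) / γ) ≥
      ∑ i, q i * max 0 (1 - y i * (∑ j, x i j * what j) / γ)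
        + ∑ j, g j * (w j - what j))
    (hz : ∀ w : Fin d → ℝ, ∑ j, |w j| ≥ ∑ j, |what j| + ∑ j, zhat j * (w j - what j))
    (hstat : ∀ j, g j + lam1 * zhat j + lam2 * what j = 0)
    (hb1 : 0 < lam1 → ∑ j, zhat j * what j = Real.sqrt s ∧ ∑ j, |what j| = Real.sqrt s)
    (hb2 : 0 < lam2 → ∑ j, what j * what j = 1)
    (κ : Fin d → ℝ)
    (hκ : ∀ j, κ j = (lam1 * zhat j + lam2 * what j) / (Real.sqrt s * lam1 + lam2))
    (w' : Fin d → ℝ)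
    (hw' : ∀ j, w' j = wstar j - what j * (∑ k, wstar k * κ k)) :
    ∑ j, g j * w' j = 0 :=
  stmt5_general d s hs g zhat what wstar lam1 lam2 hlam1 hlam2 hstat hb1 hb2 κ hκ w' hw'
end

section
/- Let a₁,…,a_n be independent Rademacher random variables and x₁,…,x_n ∈ ℝ^d given vectors. Then E_a[ sup_{‖w‖₁ ≤ t} Σ_{i=1}^n a_i (w · x_i) ] ≤ t √(2n log(2d)) · max_{1≤i≤n} ‖x_i‖_∞. -/
/-!
Write `c ω j = ∑ i, x i j * a i ω`. By ℓ¹–ℓ∞ duality the supremum is at most `t * ‖c ω‖`, with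
the sup norm on `Fin d → ℝ`. By Hoeffding's lemma each `c · j` is sub-Gaussian with variance proxy
`∑ i, x i j ^ 2 ≤ n * M ^ 2`, and Massart's finite-class argument (Jensen for `exp`, a union bound
over the `2 * d` variables `± c · j`, then optimising the exponent) bounds `𝔼 ‖c‖` by
`√(2 * n * M ^ 2 * log (2 * d))`.
-/

open MeasureTheory Real ProbabilityTheory Finset
open scoped NNReal

namespace ProbabilityTheory.HasSubgaussianMGF

variable {Ω : Type*} [MeasurableSpace Ω] {P : Measure Ω} {X : Ω → ℝ} {c c' : ℝ≥0}

lemma mono (h : HasSubgaussianMGF X c P) (hc : c ≤ c') : HasSubgaussianMGF X c' P where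
  integrable_exp_mul := h.integrable_exp_mul
  mgf_le t := (h.mgf_le t).trans <| by gcongr

end ProbabilityTheory.HasSubgaussianMGF

section Rademacher

variable {Ω : Type*} [MeasurableSpace Ω] {P : Measure Ω} [IsProbabilityMeasure P]

lemma integral_eq_zero_of_rademacher {a : Ω → ℝ} (ha : Measurable a)
    (hval : ∀ ω, a ω = 1 ∨ a ω = -1) (hrad : P {ω | a ω = 1} = 1 / 2) :
    ∫ ω, a ω ∂P = 0 := by
  set A := {ω | a ω = 1}
  have hA : MeasurableSet A := ha (measurableSet_singleton 1)
  have ha_eq : ∀ ω, a ω = 2 * A.indicator 1 ω - 1 := fun ω => by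
    rcases hval ω with h | h <;> norm_num [A, Set.indicator_apply, h]
  simp_rw [ha_eq]
  rw [integral_sub (((integrable_const 1).indicator hA).const_mul 2) (integrable_const 1),
    integral_const_mul, integral_indicator_one hA, measureReal_def, hrad]
  norm_num

lemma hasSubgaussianMGF_rademacher {a : Ω → ℝ} (ha : Measurable a)
    (hval : ∀ ω, a ω = 1 ∨ a ω = -1) (hrad : P {ω | a ω = 1} = 1 / 2) :
    HasSubgaussianMGF a 1 P := by
  have h := hasSubgaussianMGF_of_mem_Icc_of_integral_eq_zero (a := -1) (b := 1)
    ha.aemeasurable (ae_of_all _ fun ω => by rcases hval ω with h | h <;> simp [h])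
    (integral_eq_zero_of_rademacher ha hval hrad)
  convert h
  ext
  norm_num

lemma hasSubgaussianMGF_sum_mul_rademacher {ι : Type*} [Fintype ι] {a : ι → Ω → ℝ}
    (hmeas : ∀ i, Measurable (a i)) (hindep : iIndepFun a P)
    (hval : ∀ i ω, a i ω = 1 ∨ a i ω = -1) (hrad : ∀ i, P {ω | a i ω = 1} = 1 / 2)
    (s : ι → ℝ) :
    HasSubgaussianMGF (fun ω => ∑ i, s i * a i ω) (∑ i, ‖s i‖₊ ^ 2) P := by
  refine HasSubgaussianMGF.sum_of_iIndepFun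
    (hindep.comp (fun i y => s i * y) fun i => measurable_const_mul (s i)) fun i _ => ?_
  convert (hasSubgaussianMGF_rademacher (hmeas i) (hval i) (hrad i)).const_mul (s i)
  · rfl
  · ext
    change (‖s i‖₊ : ℝ) ^ 2 = s i ^ 2 * 1
    simp

end Rademacher

section Massart

variable {Ω κ : Type*} [MeasurableSpace Ω] {P : Measure Ω} [Fintype κ]
  {Z : Ω → κ → ℝ} {c : ℝ≥0}

lemma integrable_norm_of_hasSubgaussianMGF (hZ : ∀ k, HasSubgaussianMGF (fun ω => Z ω k) c P) :
    Integrable (fun ω => ‖Z ω‖) P :=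
  (Integrable.of_eval fun k => (hZ k).integrable).norm

lemma exp_mul_norm_le_sum [Nonempty κ] (z : κ → ℝ) (l : ℝ) :
    exp (l * ‖z‖) ≤ ∑ k, (exp (l * z k) + exp (-l * z k)) := by
  obtain ⟨k, -, hk⟩ := exists_mem_eq_sup univ univ_nonempty fun k => ‖z k‖₊
  have hnorm : ‖z‖ = |z k| := by rw [Pi.norm_def, hk, coe_nnnorm, Real.norm_eq_abs]
  have hk_le : exp (l * |z k|) ≤ exp (l * z k) + exp (-l * z k) := by
    rcases abs_choice (z k) with h | h <;> rw [h]
    · linarith [exp_pos (-l * z k)]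
    · rw [mul_neg, ← neg_mul]; linarith [exp_pos (l * z k)]
  rw [hnorm]
  exact hk_le.trans (single_le_sum (f := fun k => exp (l * z k) + exp (-l * z k))
    (fun k _ => by positivity) (mem_univ k))

lemma mul_integral_norm_le_of_hasSubgaussianMGF [IsProbabilityMeasure P] [Nonempty κ]
    (hZ : ∀ k, HasSubgaussianMGF (fun ω => Z ω k) c P) (l : ℝ) :
    l * ∫ ω, ‖Z ω‖ ∂P ≤ log (2 * Fintype.card κ) + c * l ^ 2 / 2 := by
  have hint : ∀ k, Integrable (fun ω => exp (l * Z ω k) + exp (-l * Z ω k)) P := fun k =>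
    ((hZ k).integrable_exp_mul l).add ((hZ k).integrable_exp_mul (-l))
  have hsum_int : Integrable (fun ω => ∑ k, (exp (l * Z ω k) + exp (-l * Z ω k))) P :=
    integrable_finsetSum _ fun k _ => hint k
  have hexp_int : Integrable (fun ω => exp (l * ‖Z ω‖)) P :=
    hsum_int.mono' (continuous_exp.comp_aestronglyMeasurable
      ((integrable_norm_of_hasSubgaussianMGF hZ).aestronglyMeasurable.const_mul l)) <|
      ae_of_all _ fun ω => by
        rw [Real.norm_eq_abs, abs_of_pos (exp_pos _)]
        exact exp_mul_norm_le_sum (Z ω) l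
  have jensen : exp (l * ∫ ω, ‖Z ω‖ ∂P) ≤ ∫ ω, exp (l * ‖Z ω‖) ∂P := by
    rw [← integral_const_mul]
    exact convexOn_exp.map_integral_le continuousOn_exp isClosed_univ
      (ae_of_all _ fun _ => trivial) ((integrable_norm_of_hasSubgaussianMGF hZ).const_mul l)
      hexp_int
  have union : ∫ ω, exp (l * ‖Z ω‖) ∂P ≤ 2 * Fintype.card κ * exp (c * l ^ 2 / 2) :=
    calc ∫ ω, exp (l * ‖Z ω‖) ∂P
        ≤ ∫ ω, ∑ k, (exp (l * Z ω k) + exp (-l * Z ω k)) ∂P :=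
          integral_mono hexp_int hsum_int fun ω => exp_mul_norm_le_sum (Z ω) l
      _ = ∑ k, (mgf (fun ω => Z ω k) P l + mgf (fun ω => Z ω k) P (-l)) := by
          rw [integral_finsetSum _ fun k _ => hint k]
          exact sum_congr rfl fun k _ => integral_add ((hZ k).integrable_exp_mul l)
            ((hZ k).integrable_exp_mul (-l))
      _ ≤ ∑ _k : κ, (exp (c * l ^ 2 / 2) + exp (c * l ^ 2 / 2)) := by
          gcongr with k
          · exact (hZ k).mgf_le l
          · simpa using (hZ k).mgf_le (-l)
      _ = 2 * Fintype.card κ * exp (c * l ^ 2 / 2) := by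
          rw [sum_const, card_univ, nsmul_eq_mul]; ring
  calc l * ∫ ω, ‖Z ω‖ ∂P
      = log (exp (l * ∫ ω, ‖Z ω‖ ∂P)) := (log_exp _).symm
    _ ≤ log (2 * Fintype.card κ * exp (c * l ^ 2 / 2)) :=
        log_le_log (exp_pos _) (jensen.trans union)
    _ = log (2 * Fintype.card κ) + c * l ^ 2 / 2 := by
        rw [log_mul (by positivity) (exp_pos _).ne', log_exp]

lemma le_sqrt_of_forall_mul_le {E L c : ℝ} (hc : 0 ≤ c)
    (h : ∀ l > 0, l * E ≤ L + c * l ^ 2 / 2) : E ≤ sqrt (2 * c * L) := by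
  rcases le_or_gt E 0 with hE | hE
  · exact hE.trans (sqrt_nonneg _)
  rcases hc.eq_or_lt with rfl | hc
  · have := h ((|L| + 1) / E) (by positivity)
    rw [div_mul_cancel₀ _ hE.ne'] at this
    linarith [le_abs_self L]
  · -- the minimiser `l = E / c` of the right-hand side
    have := h (E / c) (by positivity)
    rw [le_sqrt' hE]
    have : E ^ 2 / c ≤ 2 * L := by
      rw [show E / c * E = E ^ 2 / c by ring, show c * (E / c) ^ 2 / 2 = E ^ 2 / c / 2 by
        field_simp] at this
      linarith
    rw [div_le_iff₀ hc] at this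
    linarith

lemma integral_norm_le_of_hasSubgaussianMGF [IsProbabilityMeasure P] [Nonempty κ]
    (hZ : ∀ k, HasSubgaussianMGF (fun ω => Z ω k) c P) :
    ∫ ω, ‖Z ω‖ ∂P ≤ sqrt (2 * c * log (2 * Fintype.card κ)) :=
  le_sqrt_of_forall_mul_le c.coe_nonneg fun l _ => mul_integral_norm_le_of_hasSubgaussianMGF hZ l

end Massart

section L1Ball

variable {ι : Type*} [Fintype ι]

lemma sum_mul_le_sum_abs_mul_norm (w c : ι → ℝ) : ∑ j, w j * c j ≤ (∑ j, |w j|) * ‖c‖ :=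
  calc ∑ j, w j * c j ≤ ∑ j, |w j| * ‖c‖ := sum_le_sum fun j _ =>
        calc w j * c j ≤ |w j| * |c j| := (le_abs_self _).trans_eq (abs_mul _ _)
          _ ≤ |w j| * ‖c‖ := by gcongr; exact norm_le_pi_norm c j
    _ = (∑ j, |w j|) * ‖c‖ := (sum_mul _ _ _).symm

lemma mul_norm_mem_upperBounds (t : ℝ) (c : ι → ℝ) :
    t * ‖c‖ ∈ upperBounds {v : ℝ | ∃ w : ι → ℝ, ∑ j, |w j| ≤ t ∧ v = ∑ j, w j * c j} := by
  rintro _ ⟨w, hw, rfl⟩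
  exact (sum_mul_le_sum_abs_mul_norm w c).trans (by gcongr)

lemma sSup_sum_mul_le {t : ℝ} (ht : 0 ≤ t) (c : ι → ℝ) :
    sSup {v : ℝ | ∃ w : ι → ℝ, ∑ j, |w j| ≤ t ∧ v = ∑ j, w j * c j} ≤ t * ‖c‖ :=
  Real.sSup_le (mul_norm_mem_upperBounds t c) (by positivity)

lemma sSup_sum_mul_nonneg {t : ℝ} (ht : 0 ≤ t) (c : ι → ℝ) :
    0 ≤ sSup {v : ℝ | ∃ w : ι → ℝ, ∑ j, |w j| ≤ t ∧ v = ∑ j, w j * c j} :=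
  le_csSup ⟨t * ‖c‖, mul_norm_mem_upperBounds t c⟩ ⟨0, by simpa using ht, by simp⟩

end L1Ball

/-- Rademacher complexity of L1-constrained linear functionals:
`E_a[sup_{‖w‖₁ ≤ t} Σᵢ aᵢ (w·xᵢ)] ≤ t √(2n log(2d)) · maxᵢ ‖xᵢ‖_∞`,
stated with `M` an upper bound on `maxᵢ ‖xᵢ‖_∞`. -/
theorem stmt18 {Ω : Type*} [MeasurableSpace Ω] (P : Measure Ω)
    [IsProbabilityMeasure P] (n d : ℕ) (hn : 0 < n) (hd : 0 < d)
    (a : Fin n → Ω → ℝ) (hmeas : ∀ i, Measurable (a i))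
    (hindep : ProbabilityTheory.iIndepFun a P)
    (hval : ∀ i ω, a i ω = 1 ∨ a i ω = -1)
    (hrad : ∀ i, P {ω | a i ω = 1} = 1/2)
    (x : Fin n → Fin d → ℝ) (t M : ℝ) (ht : 0 ≤ t)
    (hM : ∀ i j, |x i j| ≤ M) :
    ∫ ω, sSup {v : ℝ | ∃ w : Fin d → ℝ, (∑ j, |w j|) ≤ t ∧
        v = ∑ i, a i ω * (∑ j, w j * x i j)} ∂P
      ≤ t * Real.sqrt (2 * n * Real.log (2 * d)) * M := by
  have hM0 : 0 ≤ M := (abs_nonneg _).trans (hM ⟨0, hn⟩ ⟨0, hd⟩)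
  have : Nonempty (Fin d) := ⟨⟨0, hd⟩⟩
  set c : Ω → Fin d → ℝ := fun ω j => ∑ i, x i j * a i ω
  have hlin (ω : Ω) (w : Fin d → ℝ) :
      ∑ i, a i ω * ∑ j, w j * x i j = ∑ j, w j * c ω j := by
    simp only [c, mul_sum]
    rw [sum_comm]
    exact sum_congr rfl fun j _ => sum_congr rfl fun i _ => by ring
  have hvar : ∀ j, ∑ i, ‖x i j‖₊ ^ 2 ≤ n * ‖M‖₊ ^ 2 := fun j =>
    calc ∑ i, ‖x i j‖₊ ^ 2 ≤ ∑ _i : Fin n, ‖M‖₊ ^ 2 := by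
          gcongr with i
          rw [← NNReal.coe_le_coe]
          simpa using (hM i j).trans (le_abs_self M)
      _ = n * ‖M‖₊ ^ 2 := by simp
  have hc : ∀ j, HasSubgaussianMGF (fun ω => c ω j) (n * ‖M‖₊ ^ 2) P := fun j =>
    (hasSubgaussianMGF_sum_mul_rademacher hmeas hindep hval hrad (x · j)).mono (hvar j)
  simp_rw [hlin]
  calc _ ≤ ∫ ω, t * ‖c ω‖ ∂P :=
        integral_mono_of_nonneg (ae_of_all _ fun ω => sSup_sum_mul_nonneg ht (c ω))
          ((integrable_norm_of_hasSubgaussianMGF hc).const_mul t)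
          (ae_of_all _ fun ω => sSup_sum_mul_le ht (c ω))
    _ = t * ∫ ω, ‖c ω‖ ∂P := integral_const_mul t _
    _ ≤ t * sqrt (2 * ↑(n * ‖M‖₊ ^ 2) * log (2 * Fintype.card (Fin d))) := by
        gcongr; exact integral_norm_le_of_hasSubgaussianMGF hc
    _ = t * sqrt (2 * n * log (2 * d)) * M := by
        rw [Fintype.card_fin, NNReal.coe_mul, NNReal.coe_pow, coe_nnnorm, Real.norm_eq_abs,
          abs_of_nonneg hM0, show 2 * (((n : ℝ≥0) : ℝ) * M ^ 2) * log (2 * d)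
            = 2 * n * log (2 * d) * M ^ 2 by push_cast; ring,
          sqrt_mul' _ (sq_nonneg M), sqrt_sq hM0, ← mul_assoc]
end
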